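/- Let b, c ∈ (0, π), α ∈ (0, π), and α₁ ∈ (0, α/2]. Set λ₁ = sin(α − α₁)/(sin(α − α₁) + sin(α₁)) and λ₂ = sin(α₁)/(sin(α − α₁) + sin(α₁)). Then (sin(α − α₁)·cot(b) + sin(α₁)·cot(c)) / (sin(α − α₁) + sin(α₁)) ≤ cot( b·c·(sin(α − α₁) + sin(α₁)) / (b·sin(α₁) + c·sin(α − α₁)) ), with equality if and only if b = c. -/

import Mathlib

open Real Set

/-! With `f t = cot t⁻¹` and weights `λᵢ = wᵢ / (w₁ + w₂)`, the left side is `λ₁ f b⁻¹ + λ₂ f c⁻¹`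
and the right side is `f (λ₁ b⁻¹ + λ₂ c⁻¹)`, so the inequality and its equality case are the strict
concavity of `f` on `(π⁻¹, ∞)`. There `f' t = (t sin t⁻¹)⁻²` is strictly decreasing, because
`sin u / u`, the slope of a chord from the origin of the strictly concave `sin`, strictly decreases
on `(0, π]`. -/

theorem Real.hasDerivAt_cot {x : ℝ} (hx : sin x ≠ 0) : HasDerivAt cot (-(sin x ^ 2)⁻¹) x := by
  rw [show cot = fun y => cos y / sin y from funext cot_eq_cos_div_sin]
  refine ((hasDerivAt_cos x).div (hasDerivAt_sin x) hx).congr_deriv ?_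
  field_simp
  linear_combination -sin_sq_add_cos_sq x

theorem Real.strictAntiOn_sin_div : StrictAntiOn (fun x => sin x / x) (Ioc 0 π) := by
  intro x hx y hy hxy
  simpa using strictConcaveOn_sin_Icc.secant_strict_mono (a := 0) ⟨le_rfl, pi_pos.le⟩
    (Ioc_subset_Icc_self hx) (Ioc_subset_Icc_self hy) hx.1.ne' hy.1.ne' hxy

theorem hasDerivAt_cot_inv {t : ℝ} (ht : t ≠ 0) (hs : sin t⁻¹ ≠ 0) :
    HasDerivAt (fun t => cot t⁻¹) ((t * sin t⁻¹)⁻¹ ^ 2) t := by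
  refine ((hasDerivAt_cot hs).comp t (hasDerivAt_inv ht)).congr_deriv ?_
  ring

theorem inv_mem_Ioo_zero_pi {t : ℝ} (ht : π⁻¹ < t) : t⁻¹ ∈ Ioo 0 π := by
  have ht0 : 0 < t := (inv_pos.2 pi_pos).trans ht
  exact ⟨inv_pos.2 ht0, (inv_lt_comm₀ ht0 pi_pos).2 ht⟩

theorem mul_sin_inv_pos {t : ℝ} (ht : π⁻¹ < t) : 0 < t * sin t⁻¹ := by
  obtain ⟨hu0, huπ⟩ := inv_mem_Ioo_zero_pi ht
  exact mul_pos (inv_pos.1 hu0) (sin_pos_of_pos_of_lt_pi hu0 huπ)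

theorem strictMonoOn_mul_sin_inv : StrictMonoOn (fun t => t * sin t⁻¹) (Ioi π⁻¹) := by
  intro s hs t ht hst
  have hs' := inv_mem_Ioo_zero_pi hs
  have ht' := inv_mem_Ioo_zero_pi ht
  have key := strictAntiOn_sin_div (Ioo_subset_Ioc_self ht') (Ioo_subset_Ioc_self hs')
    (inv_strictAnti₀ (inv_pos.1 hs'.1) hst)
  simpa [div_inv_eq_mul, mul_comm] using key

theorem strictConcaveOn_cot_inv : StrictConcaveOn ℝ (Ioi π⁻¹) (fun t => cot t⁻¹) := by
  have hderiv (t : ℝ) (ht : π⁻¹ < t) :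
      HasDerivAt (fun t => cot t⁻¹) ((t * sin t⁻¹)⁻¹ ^ 2) t := by
    obtain ⟨hu0, huπ⟩ := inv_mem_Ioo_zero_pi ht
    exact hasDerivAt_cot_inv (inv_pos.1 hu0).ne' (sin_pos_of_pos_of_lt_pi hu0 huπ).ne'
  refine StrictAntiOn.strictConcaveOn_of_deriv (convex_Ioi _)
    (fun t ht => (hderiv t ht).continuousAt.continuousWithinAt) ?_
  rw [interior_Ioi]
  intro s hs t ht hst
  rw [(hderiv s hs).deriv, (hderiv t ht).deriv]
  have hmono := strictMonoOn_mul_sin_inv hs ht hst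
  exact pow_lt_pow_left₀ (inv_strictAnti₀ (mul_sin_inv_pos hs) hmono)
    (inv_pos.2 (mul_sin_inv_pos ht)).le two_ne_zero

section WeightedMean

variable {w₁ w₂ b c : ℝ}

theorem weighted_cot_eq_smul_add_smul :
    (w₁ * cot b + w₂ * cot c) / (w₁ + w₂) =
      (w₁ / (w₁ + w₂)) • cot b⁻¹⁻¹ + (w₂ / (w₁ + w₂)) • cot c⁻¹⁻¹ := by
  simp only [inv_inv, smul_eq_mul]
  ring

theorem harmonic_mean_inv_eq_smul_add_smul (hb : b ≠ 0) (hc : c ≠ 0) :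
    (b * c * (w₁ + w₂) / (b * w₂ + c * w₁))⁻¹ =
      (w₁ / (w₁ + w₂)) • b⁻¹ + (w₂ / (w₁ + w₂)) • c⁻¹ := by
  rw [inv_div, smul_eq_mul, smul_eq_mul]
  field_simp
  ring

theorem weighted_cot_le_cot_harmonic (hw₁ : 0 < w₁) (hw₂ : 0 < w₂) (hb : b ∈ Ioo 0 π)
    (hc : c ∈ Ioo 0 π) :
    (w₁ * cot b + w₂ * cot c) / (w₁ + w₂) ≤ cot (b * c * (w₁ + w₂) / (b * w₂ + c * w₁)) := by
  rw [weighted_cot_eq_smul_add_smul, ← inv_inv (b * c * _ / _),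
    harmonic_mean_inv_eq_smul_add_smul hb.1.ne' hc.1.ne']
  exact strictConcaveOn_cot_inv.concaveOn.2 (inv_strictAnti₀ hb.1 hb.2)
    (inv_strictAnti₀ hc.1 hc.2) (by positivity) (by positivity) (by field_simp)

theorem weighted_cot_lt_cot_harmonic (hw₁ : 0 < w₁) (hw₂ : 0 < w₂) (hb : b ∈ Ioo 0 π)
    (hc : c ∈ Ioo 0 π) (hbc : b ≠ c) :
    (w₁ * cot b + w₂ * cot c) / (w₁ + w₂) < cot (b * c * (w₁ + w₂) / (b * w₂ + c * w₁)) := by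
  rw [weighted_cot_eq_smul_add_smul, ← inv_inv (b * c * _ / _),
    harmonic_mean_inv_eq_smul_add_smul hb.1.ne' hc.1.ne']
  exact strictConcaveOn_cot_inv.2 (inv_strictAnti₀ hb.1 hb.2) (inv_strictAnti₀ hc.1 hc.2)
    (inv_injective.ne hbc) (by positivity) (by positivity) (by field_simp)

theorem weighted_cot_self (hw : w₁ + w₂ ≠ 0) (hb : b ≠ 0) :
    (w₁ * cot b + w₂ * cot b) / (w₁ + w₂) = cot (b * b * (w₁ + w₂) / (b * w₂ + b * w₁)) := by
  rw [← add_mul, mul_div_cancel_left₀ _ hw, ← mul_add, add_comm w₂, mul_assoc,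
    mul_div_mul_left _ _ hb, mul_div_cancel_right₀ _ hw]

end WeightedMean

/-- For `b, c ∈ (0, π)`, `α ∈ (0, π)` and `α₁ ∈ (0, α/2]`, the weighted average of
cotangents is bounded by the cotangent of the weighted harmonic-type mean:
`(sin(α−α₁)·cot b + sin α₁·cot c)/(sin(α−α₁)+sin α₁)
  ≤ cot( b·c·(sin(α−α₁)+sin α₁)/(b·sin α₁ + c·sin(α−α₁)) )`,
with equality if and only if `b = c`. -/
theorem cot_avg_le_cot_mean (b c α α₁ : ℝ)
    (hb : b ∈ Set.Ioo 0 π) (hc : c ∈ Set.Ioo 0 π)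
    (hα : α ∈ Set.Ioo 0 π) (hα₁ : α₁ ∈ Set.Ioc 0 (α / 2)) :
    (Real.sin (α - α₁) * Real.cot b + Real.sin α₁ * Real.cot c)
        / (Real.sin (α - α₁) + Real.sin α₁)
      ≤ Real.cot (b * c * (Real.sin (α - α₁) + Real.sin α₁)
        / (b * Real.sin α₁ + c * Real.sin (α - α₁))) ∧
    ((Real.sin (α - α₁) * Real.cot b + Real.sin α₁ * Real.cot c)
        / (Real.sin (α - α₁) + Real.sin α₁)
      = Real.cot (b * c * (Real.sin (α - α₁) + Real.sin α₁)
        / (b * Real.sin α₁ + c * Real.sin (α - α₁))) ↔ b = c) := by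
  obtain ⟨hα0, hαπ⟩ := hα
  obtain ⟨hα₁0, hα₁α⟩ := hα₁
  have hs₁ : 0 < sin (α - α₁) := sin_pos_of_pos_of_lt_pi (by linarith) (by linarith)
  have hs₂ : 0 < sin α₁ := sin_pos_of_pos_of_lt_pi hα₁0 (by linarith)
  refine ⟨weighted_cot_le_cot_harmonic hs₁ hs₂ hb hc, fun heq => ?_, ?_⟩
  · by_contra hbc
    exact (weighted_cot_lt_cot_harmonic hs₁ hs₂ hb hc hbc).ne heq
  · rintro rfl
    exact weighted_cot_self (by positivity) hb.1.ne'
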